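/- arXiv:2104.12530 — 7 statements merged into one kernel-verified Lean document; each statement's English description precedes it below -/
import Mathlib

section
/- For every index i, the function h ↦ CN_1(h)_i − u_ex(h)_i is O(h²) as h → 0 from the right; i.e., the one-stage constant-neighbour method has local truncation error of order two, so it is a first-order method. -/
open Finset NormedSpace Asymptotics

/-- `aCoef M Q v i = Σ_{j≠i} M_ij v_j + Q_i`. -/
noncomputable def aCoef {N : ℕ} (M : Matrix (Fin N) (Fin N) ℝ) (Q : Fin N → ℝ)
    (v : Fin N → ℝ) (i : Fin N) : ℝ :=
  (∑ j ∈ Finset.univ.erase i, M i j * v j) + Q i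

/-- The constant-neighbour step `F_h`. -/
noncomputable def cnStep {N : ℕ} (M : Matrix (Fin N) (Fin N) ℝ) (Q u0 : Fin N → ℝ)
    (h : ℝ) (v : Fin N → ℝ) : Fin N → ℝ :=
  fun i => u0 i * Real.exp (M i i * h)
    + (aCoef M Q v i / (-(M i i))) * (1 - Real.exp (M i i * h))

/-- The `k`-stage constant-neighbour approximation `CN_k(h) = F_h^[k] u⁰`. -/
noncomputable def CN {N : ℕ} (M : Matrix (Fin N) (Fin N) ℝ) (Q u0 : Fin N → ℝ)
    (k : ℕ) (h : ℝ) : Fin N → ℝ :=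
  (cnStep M Q u0 h)^[k] u0

/-- The effective slope `s_i(v) = (a_i(v) − a_i(u⁰))/h`. -/
noncomputable def sCoef {N : ℕ} (M : Matrix (Fin N) (Fin N) ℝ) (Q u0 : Fin N → ℝ)
    (h : ℝ) (v : Fin N → ℝ) (i : Fin N) : ℝ :=
  (aCoef M Q v i - aCoef M Q u0 i) / h

/-- The linear-neighbour step `G_h`, with `τ_i = −1/M_ii`. -/
noncomputable def lnStep {N : ℕ} (M : Matrix (Fin N) (Fin N) ℝ) (Q u0 : Fin N → ℝ)
    (h : ℝ) (v : Fin N → ℝ) : Fin N → ℝ :=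
  fun i =>
    u0 i * Real.exp (M i i * h)
      + (aCoef M Q u0 i * (-(M i i)⁻¹) - sCoef M Q u0 h v i * (-(M i i)⁻¹) ^ 2)
          * (1 - Real.exp (M i i * h))
      + sCoef M Q u0 h v i * (-(M i i)⁻¹) * h

/-- The `k`-stage linear-neighbour approximation `LN_k(h) = G_h^[k−1] (CN_1(h))`, `k ≥ 2`. -/
noncomputable def LN {N : ℕ} (M : Matrix (Fin N) (Fin N) ℝ) (Q u0 : Fin N → ℝ)
    (k : ℕ) (h : ℝ) : Fin N → ℝ :=
  (lnStep M Q u0 h)^[k - 1] (cnStep M Q u0 h u0)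

/-- The exact solution `u_ex(h) = e^{hM} u⁰ + ∫₀^h e^{(h−s)M} Q ds`. -/
noncomputable def uex {N : ℕ} (M : Matrix (Fin N) (Fin N) ℝ) (Q u0 : Fin N → ℝ)
    (h : ℝ) : Fin N → ℝ :=
  (exp (h • M)).mulVec u0 + ∫ s in (0:ℝ)..h, (exp ((h - s) • M)).mulVec Q

/-! `F_h` freezes the off-diagonal neighbours at `u⁰`, which is exact to first order: both
`h ↦ CN₁(h)ᵢ` and `h ↦ u_ex(h)ᵢ` take the value `u⁰ᵢ` at `h = 0` and have derivative
`(M u⁰ + Q)ᵢ` there. Their difference thus vanishes at `0` together with its derivative, which is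
itself differentiable at `0`, and the mean value theorem bounds it by `C h²`. -/

open Filter Topology Matrix

theorem isBigO_sq_of_hasDerivAt_of_differentiableAt {E : Type*} [NormedAddCommGroup E]
    [NormedSpace ℝ E] {f f' : ℝ → E} (hf : ∀ᶠ t in 𝓝 0, HasDerivAt f (f' t) t)
    (hf' : DifferentiableAt ℝ f' 0) (hf0 : f 0 = 0) (hf'0 : f' 0 = 0) :
    f =O[𝓝 0] fun t => t ^ 2 := by
  have hf'O : f' =O[𝓝 0] fun t => t := by
    simpa [hf'0] using hf'.hasFDerivAt.isBigO_sub
  obtain ⟨C, hC, hC'⟩ := hf'O.exists_pos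
  obtain ⟨ε, hε, hball⟩ := Metric.eventually_nhds_iff_ball.1 (hf.and hC'.bound)
  refine .of_bound C (eventually_of_mem (Metric.ball_mem_nhds 0 hε) fun t ht => ?_)
  have hle : ∀ s ∈ Set.uIcc 0 t, ‖s‖ ≤ ‖t‖ := fun s hs => by
    simpa using Set.abs_sub_left_of_mem_uIcc hs
  have hseg : Set.uIcc 0 t ⊆ Metric.ball 0 ε := fun s hs =>
    mem_ball_zero_iff.2 ((hle s hs).trans_lt (mem_ball_zero_iff.1 ht))
  have hbound : ∀ s ∈ Set.uIcc 0 t, ‖f' s‖ ≤ C * ‖t‖ := fun s hs =>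
    (hball s (hseg hs)).2.trans (mul_le_mul_of_nonneg_left (hle s hs) hC.le)
  have hmvt := (convex_uIcc 0 t).norm_image_sub_le_of_norm_hasDerivWithin_le
    (fun s hs => (hball s (hseg hs)).1.hasDerivWithinAt) hbound Set.left_mem_uIcc
    Set.right_mem_uIcc
  simpa [hf0, sq, mul_assoc] using hmvt

-- Any norm would do here: `exp` and `HasDerivAt` only depend on the topology of matrices.
attribute [local instance] Matrix.linftyOpNormedAddCommGroup Matrix.linftyOpNormedSpace
  Matrix.linftyOpNormedRing Matrix.linftyOpNormedAlgebra

theorem HasDerivAt.matrix_mulVec_const {𝕜 m n : Type*} [NontriviallyNormedField 𝕜]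
    [CompleteSpace 𝕜] [Fintype m] [Fintype n] {A : 𝕜 → Matrix m n 𝕜} {A' : Matrix m n 𝕜}
    {t : 𝕜} (hA : HasDerivAt A A' t) (v : n → 𝕜) :
    HasDerivAt (fun s => A s *ᵥ v) (A' *ᵥ v) t := by
  exact (LinearMap.toContinuousLinearMap ((mulVecBilin 𝕜 𝕜).flip v)).hasFDerivAt.comp_hasDerivAt
    t hA

theorem hasDerivAt_exp_smul_mulVec {n : Type*} [Fintype n] [DecidableEq n] (M : Matrix n n ℝ)
    (v : n → ℝ) (t : ℝ) :
    HasDerivAt (fun s : ℝ => exp (s • M) *ᵥ v) (exp (t • M) *ᵥ (M *ᵥ v)) t := by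
  rw [mulVec_mulVec]
  exact (hasDerivAt_exp_smul_const M t).matrix_mulVec_const v

section ConstantNeighbour

variable {N : ℕ} (M : Matrix (Fin N) (Fin N) ℝ) (Q u0 : Fin N → ℝ)

theorem uex_eq_integral (h : ℝ) :
    uex M Q u0 h = exp (h • M) *ᵥ u0 + ∫ s in (0 : ℝ)..h, exp (s • M) *ᵥ Q := by
  rw [uex]
  congr 1
  simpa using intervalIntegral.integral_comp_sub_left (a := 0) (b := h)
    (fun s : ℝ => exp (s • M) *ᵥ Q) h

theorem hasDerivAt_uex (t : ℝ) :
    HasDerivAt (uex M Q u0) (exp (t • M) *ᵥ (M *ᵥ u0 + Q)) t := by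
  have hint : HasDerivAt (fun h : ℝ => ∫ s in (0 : ℝ)..h, exp (s • M) *ᵥ Q)
      (exp (t • M) *ᵥ Q) t :=
    (continuous_iff_continuousAt.2 fun s => (hasDerivAt_exp_smul_mulVec M Q s).continuousAt
      ).integral_hasStrictDerivAt 0 t |>.hasDerivAt
  rw [funext (uex_eq_integral M Q u0), mulVec_add]
  exact (hasDerivAt_exp_smul_mulVec M u0 t).add hint

theorem diag_mul_add_aCoef (v : Fin N → ℝ) (i : Fin N) :
    M i i * v i + aCoef M Q v i = (M *ᵥ v + Q) i := by
  rw [aCoef, Pi.add_apply, mulVec, dotProduct, ← add_sum_erase _ _ (mem_univ i)]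
  ring

theorem hasDerivAt_CN_one_apply {i : Fin N} (hMi : M i i ≠ 0) (t : ℝ) :
    HasDerivAt (fun h => CN M Q u0 1 h i) (Real.exp (M i i * t) * (M *ᵥ u0 + Q) i) t := by
  have hexp : HasDerivAt (fun h => Real.exp (M i i * h)) (Real.exp (M i i * t) * M i i) t := by
    simpa [mul_comm] using ((hasDerivAt_id t).const_mul (M i i)).exp
  refine ((hexp.const_mul (u0 i)).add
    ((hexp.const_sub 1).const_mul (aCoef M Q u0 i / -M i i))).congr_deriv ?_
  rw [← diag_mul_add_aCoef]
  field_simp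

end ConstantNeighbour

theorem cn1_first_order_general {N : ℕ} (M : Matrix (Fin N) (Fin N) ℝ)
    (hM : ∀ i, M i i < 0) (Q u0 : Fin N → ℝ) (i : Fin N) :
    (fun h : ℝ => CN M Q u0 1 h i - uex M Q u0 h i)
      =O[nhdsWithin 0 (Set.Ioi 0)] fun h : ℝ => h ^ 2 := by
  set w := M *ᵥ u0 + Q
  have herr : ∀ t, HasDerivAt (fun h => CN M Q u0 1 h i - uex M Q u0 h i)
      (Real.exp (M i i * t) * w i - (exp (t • M) *ᵥ w) i) t := fun t =>
    (hasDerivAt_CN_one_apply M Q u0 (hM i).ne t).sub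
      (hasDerivAt_pi.1 (hasDerivAt_uex M Q u0 t) i)
  have hdiff :
      DifferentiableAt ℝ (fun t => Real.exp (M i i * t) * w i - (exp (t • M) *ᵥ w) i) 0 :=
    (by fun_prop : DifferentiableAt ℝ (fun t => Real.exp (M i i * t) * w i) 0).sub
      (hasDerivAt_pi.1 (hasDerivAt_exp_smul_mulVec M w 0) i).differentiableAt
  refine (isBigO_sq_of_hasDerivAt_of_differentiableAt (.of_forall herr) hdiff ?_ ?_).mono
    nhdsWithin_le_nhds
  · simp [CN, cnStep, uex]
  · simp

/-- The one-stage constant-neighbour method has local truncation error `O(h²)`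
as `h → 0⁺`, i.e. it is a first-order method. -/
theorem cn1_first_order {N : ℕ} (hN : 1 ≤ N) (M : Matrix (Fin N) (Fin N) ℝ)
    (hM : ∀ i, M i i < 0) (Q u0 : Fin N → ℝ) (i : Fin N) :
    (fun h : ℝ => CN M Q u0 1 h i - uex M Q u0 h i)
      =O[nhdsWithin 0 (Set.Ioi 0)] fun h : ℝ => h ^ 2 :=
  cn1_first_order_general M hM Q u0 i
end

section
/- For every k ≥ 1 and every index i, the function h ↦ CN_k(h)_i − u_ex(h)_i is O(h²) as h → 0 from the right; i.e., all iterated constant-neighbour methods CN_1, CN_2, CN_3, … are at least first-order numerical methods for the linear ODE initial value problem du/dt = M u + Q, u(0) = u⁰ (Theorem 1, constant-neighbour part). -/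
open Finset NormedSpace Asymptotics

/- ## Auxiliary lemmas -/

/-- If `f` is differentiable with derivative `f'`, `f 0 = 0`, `f' 0 = 0`, and `f'` is
differentiable at `0`, then `f = O(h²)` as `h → 0⁺`. -/
theorem bigO_sq {f f' : ℝ → ℝ} (hd : ∀ t, HasDerivAt f (f' t) t) (h0 : f 0 = 0)
    (h'0 : f' 0 = 0) (hd' : DifferentiableAt ℝ f' 0) :
    f =O[nhdsWithin 0 (Set.Ioi 0)] fun h : ℝ => h ^ 2 := by
  have hO : (fun t => f' t) =O[nhds 0] fun t => t := by
    simpa [h'0] using (hd'.hasDerivAt.isBigO_sub).congr' (by simp [h'0])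
      (Filter.Eventually.of_forall fun x => by simp)
  obtain ⟨C, hC⟩ := hO.bound
  rw [Metric.eventually_nhds_iff] at hC
  obtain ⟨δ, hδ, hbound⟩ := hC
  rw [isBigO_iff]
  refine ⟨|C|, ?_⟩
  filter_upwards [eventually_nhdsWithin_of_eventually_nhds
    (Metric.eventually_nhds_iff.2 ⟨δ, hδ, fun y hy => hy⟩), self_mem_nhdsWithin] with h hh hpos
  simp only [Set.mem_Ioi] at hpos
  -- on [0, h], |f' t| ≤ C * h
  have key : ‖f h - f 0‖ ≤ (|C| * h) * ‖h - 0‖ := by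
    apply (convex_Icc (0:ℝ) h).norm_image_sub_le_of_norm_hasDerivWithin_le
      (fun t ht => (hd t).hasDerivWithinAt) (fun t ht => ?_) (Set.left_mem_Icc.2 hpos.le)
      (Set.right_mem_Icc.2 hpos.le)
    have ht' : dist t 0 < δ := by
      rw [Real.dist_eq, sub_zero, abs_of_nonneg ht.1]
      exact lt_of_le_of_lt ht.2 (by simpa [Real.dist_eq, abs_of_pos hpos] using hh)
    calc ‖f' t‖ ≤ C * ‖t‖ := hbound ht'
      _ ≤ |C| * ‖t‖ := mul_le_mul_of_nonneg_right (le_abs_self C) (norm_nonneg t)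
      _ ≤ |C| * h := mul_le_mul_of_nonneg_left
          (by rw [Real.norm_eq_abs, abs_of_nonneg ht.1]; exact ht.2) (abs_nonneg C)
  rw [h0, sub_zero, sub_zero] at key
  calc ‖f h‖ ≤ |C| * h * ‖h‖ := key
    _ = |C| * ‖h ^ 2‖ := by
      rw [Real.norm_eq_abs, Real.norm_eq_abs, abs_of_pos hpos, abs_of_pos (pow_pos hpos 2), sq]
      ring

section CNlem
variable {N : ℕ} (M : Matrix (Fin N) (Fin N) ℝ) (Q u0 : Fin N → ℝ)

theorem cnStep_zero (v : Fin N → ℝ) : cnStep M Q u0 0 v = u0 := by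
  funext i; simp [cnStep]

theorem CN_zero (m : ℕ) : CN M Q u0 m 0 = u0 := by
  induction m with
  | zero => rfl
  | succ m ih => rw [CN, Function.iterate_succ_apply']; exact cnStep_zero M Q u0 _

theorem CN_succ (m : ℕ) (h : ℝ) :
    CN M Q u0 (m + 1) h = cnStep M Q u0 h (CN M Q u0 m h) := by
  rw [CN, Function.iterate_succ_apply']; rfl

theorem CN_contDiff (m : ℕ) (j : Fin N) :
    ContDiff ℝ (⊤ : ℕ∞) (fun h : ℝ => CN M Q u0 m h j) := by
  induction m generalizing j with
  | zero => exact contDiff_const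
  | succ m ih =>
    have : (fun h : ℝ => CN M Q u0 (m + 1) h j)
        = fun h => u0 j * Real.exp (M j j * h)
          + (aCoef M Q (CN M Q u0 m h) j / (-(M j j))) * (1 - Real.exp (M j j * h)) := by
      funext h; rw [CN_succ]; rfl
    rw [this]
    have hexp : ContDiff ℝ (⊤ : ℕ∞) (fun h : ℝ => Real.exp (M j j * h)) :=
      Real.contDiff_exp.comp (contDiff_const.mul contDiff_id)
    have ha : ContDiff ℝ (⊤ : ℕ∞) (fun h : ℝ => aCoef M Q (CN M Q u0 m h) j) := by
      unfold aCoef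
      exact (ContDiff.sum fun l _ => contDiff_const.mul (ih l)).add contDiff_const
    exact (contDiff_const.mul hexp).add
      ((ha.div_const _).mul (contDiff_const.sub hexp))

theorem aCoef_differentiableAt (m : ℕ) (j : Fin N) (t : ℝ) :
    DifferentiableAt ℝ (fun h : ℝ => aCoef M Q (CN M Q u0 m h) j) t := by
  unfold aCoef
  exact (DifferentiableAt.fun_sum fun l _ =>
    (differentiableAt_const _).mul (((CN_contDiff M Q u0 m l).differentiable (by simp)) t)).add
    (differentiableAt_const _)

theorem CN_hasDerivAt_zero (m : ℕ) (i : Fin N) (hMi : M i i ≠ 0) :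
    HasDerivAt (fun h : ℝ => CN M Q u0 (m + 1) h i)
      (M i i * u0 i + aCoef M Q u0 i) 0 := by
  have hrw : (fun h : ℝ => CN M Q u0 (m + 1) h i)
      = fun h => u0 i * Real.exp (M i i * h)
        + (aCoef M Q (CN M Q u0 m h) i / (-(M i i))) * (1 - Real.exp (M i i * h)) := by
    funext h; rw [CN_succ]; rfl
  rw [hrw]
  have hexp : HasDerivAt (fun h : ℝ => Real.exp (M i i * h)) (M i i) 0 := by
    simpa using ((hasDerivAt_id 0).const_mul (M i i)).exp
  have hd := (aCoef_differentiableAt M Q u0 m i 0).hasDerivAt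
  have H := ((hexp.const_mul (u0 i)).add
    (((hd.div_const (-(M i i))).mul ((hasDerivAt_const 0 (1:ℝ)).sub hexp))))
  refine H.congr_deriv ?_
  rw [CN_zero]
  simp
  field_simp

end CNlem

section MatrixEntry
variable {N : ℕ} (M : Matrix (Fin N) (Fin N) ℝ) (Q u0 : Fin N → ℝ)

noncomputable def entryCLM (i j : Fin N) : Matrix (Fin N) (Fin N) ℝ →L[ℝ] ℝ :=
  { toFun := fun A => A i j
    map_add' := fun _ _ => rfl
    map_smul' := fun _ _ => rfl
    cont := (continuous_apply j).comp (continuous_apply i) }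

theorem entry_hasDerivAt (i j : Fin N) (h : ℝ) :
    HasDerivAt (fun t : ℝ => exp (t • M) i j) ((M * exp (h • M)) i j) h := by
  letI : SeminormedRing (Matrix (Fin N) (Fin N) ℝ) := Matrix.linftyOpSemiNormedRing
  letI : NormedRing (Matrix (Fin N) (Fin N) ℝ) := Matrix.linftyOpNormedRing
  letI : NormedAlgebra ℝ (Matrix (Fin N) (Fin N) ℝ) := Matrix.linftyOpNormedAlgebra
  have H : HasDerivAt (fun t : ℝ => exp (t • M)) (M * exp (h • M)) h :=
    hasDerivAt_exp_smul_const' M h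
  exact ((entryCLM i j).hasFDerivAt.comp_hasDerivAt h H :)

theorem entry_continuous (i j : Fin N) :
    Continuous (fun t : ℝ => exp (t • M) i j) :=
  continuous_iff_continuousAt.2 fun h => (entry_hasDerivAt M i j h).continuousAt

/-- the integrand of `w`. -/
theorem integrand_continuous (l : Fin N) :
    Continuous (fun s : ℝ => ∑ j, exp ((-s) • M) l j * Q j) :=
  continuous_finset_sum _ fun j _ =>
    ((entry_continuous M l j).comp continuous_neg).mul continuous_const

/-- scalar integrals `w l h`. -/
noncomputable def wInt (l : Fin N) (h : ℝ) : ℝ :=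
  ∫ s in (0:ℝ)..h, ∑ j, exp ((-s) • M) l j * Q j

theorem wInt_hasDerivAt (l : Fin N) (h : ℝ) :
    HasDerivAt (wInt M Q l) (∑ j, exp ((-h) • M) l j * Q j) h :=
  ((integrand_continuous M Q l).integral_hasStrictDerivAt 0 h).hasDerivAt

theorem exp_split (a b : ℝ) :
    exp ((a + b) • M) = exp (a • M) * exp (b • M) := by
  rw [add_smul]
  exact Matrix.exp_add_of_commute _ _ (((Commute.refl M).smul_left a).smul_right b)

theorem uex_repr (h : ℝ) (i : Fin N) :
    uex M Q u0 h i = ∑ l, exp (h • M) i l * (u0 l + wInt M Q l h) := by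
  have hcont : Continuous fun s : ℝ => (exp ((h - s) • M)).mulVec Q := by
    refine continuous_pi fun a => ?_
    simp only [Matrix.mulVec, dotProduct]
    exact continuous_finset_sum _ fun j _ =>
      ((entry_continuous M a j).comp (continuous_const.sub continuous_id)).mul continuous_const
  have hint : IntervalIntegrable (fun s : ℝ => (exp ((h - s) • M)).mulVec Q)
      MeasureTheory.volume 0 h := hcont.intervalIntegrable 0 h
  have hcomp : (∫ s in (0:ℝ)..h, (exp ((h - s) • M)).mulVec Q) i
      = ∫ s in (0:ℝ)..h, ((exp ((h - s) • M)).mulVec Q) i := by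
    exact ((ContinuousLinearMap.proj (R := ℝ) (φ := fun _ : Fin N => ℝ) i).intervalIntegral_comp_comm
      hint).symm
  have key : ∀ s : ℝ, ((exp ((h - s) • M)).mulVec Q) i
      = ∑ l, exp (h • M) i l * (∑ j, exp ((-s) • M) l j * Q j) := by
    intro s
    have : (h - s) • M = (h + -s) • M := by ring_nf
    rw [Matrix.mulVec, this, exp_split]
    simp only [dotProduct, Matrix.mul_apply]
    simp_rw [Finset.sum_mul]
    rw [Finset.sum_comm]
    refine Finset.sum_congr rfl fun l _ => ?_
    rw [Finset.mul_sum]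
    exact Finset.sum_congr rfl fun j _ => by ring
  simp only [uex, Pi.add_apply, hcomp]
  rw [Matrix.mulVec]
  simp only [dotProduct]
  have : (∫ s in (0:ℝ)..h, ((exp ((h - s) • M)).mulVec Q) i)
      = ∑ l, exp (h • M) i l * wInt M Q l h := by
    rw [intervalIntegral.integral_congr (fun s _ => key s),
      intervalIntegral.integral_finset_sum]
    · exact Finset.sum_congr rfl fun l _ => intervalIntegral.integral_const_mul _ _
    · intro l _
      exact (continuous_const.mul (integrand_continuous M Q l)).intervalIntegrable 0 h
  rw [this, ← Finset.sum_add_distrib]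
  exact Finset.sum_congr rfl fun l _ => by ring

theorem uex_zero : uex M Q u0 0 = u0 := by
  funext i
  rw [uex_repr]
  simp [wInt, zero_smul, exp_zero, Matrix.one_apply]

theorem uex_hasDerivAt (h : ℝ) (i : Fin N) :
    HasDerivAt (fun t : ℝ => uex M Q u0 t i)
      ((M.mulVec (uex M Q u0 h) + Q) i) h := by
  have hrw : (fun t : ℝ => uex M Q u0 t i)
      = fun t => ∑ l, exp (t • M) i l * (u0 l + wInt M Q l t) :=
    funext fun t => uex_repr M Q u0 t i
  rw [hrw]
  have H : HasDerivAt (fun t : ℝ => ∑ l, exp (t • M) i l * (u0 l + wInt M Q l t))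
      (∑ l, ((M * exp (h • M)) i l * (u0 l + wInt M Q l h)
        + exp (h • M) i l * (∑ j, exp ((-h) • M) l j * Q j))) h :=
    HasDerivAt.fun_sum fun l _ =>
      (entry_hasDerivAt M i l h).mul ((wInt_hasDerivAt M Q l h).const_add (u0 l))
  convert H using 1
  rw [Finset.sum_add_distrib]
  have h1 : ∑ l, (M * exp (h • M)) i l * (u0 l + wInt M Q l h)
      = ∑ m, M i m * uex M Q u0 h m := by
    simp_rw [Matrix.mul_apply, Finset.sum_mul, mul_assoc]
    rw [Finset.sum_comm]
    exact Finset.sum_congr rfl fun m _ => by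
      rw [← Finset.mul_sum, ← uex_repr]
  have h2 : ∑ l, exp (h • M) i l * (∑ j, exp ((-h) • M) l j * Q j) = Q i := by
    simp_rw [Finset.mul_sum, ← mul_assoc]
    rw [Finset.sum_comm]
    simp_rw [← Finset.sum_mul, ← Matrix.mul_apply, ← exp_split]
    simp [Matrix.one_apply, zero_smul, exp_zero]
  rw [h1, h2, Pi.add_apply, Matrix.mulVec, dotProduct]

end MatrixEntry

/-- Theorem 1 (constant-neighbour part): for every `k ≥ 1`, the `k`-stage
constant-neighbour method has local truncation error `O(h²)` as `h → 0⁺`,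
i.e. all methods `CN_1, CN_2, …` are at least first order. -/
theorem cn_iterates_first_order {N : ℕ} (hN : 1 ≤ N) (M : Matrix (Fin N) (Fin N) ℝ)
    (hM : ∀ i, M i i < 0) (Q u0 : Fin N → ℝ) (k : ℕ) (hk : 1 ≤ k) (i : Fin N) :
    (fun h : ℝ => CN M Q u0 k h i - uex M Q u0 h i)
      =O[nhdsWithin 0 (Set.Ioi 0)] fun h : ℝ => h ^ 2 := by
  obtain ⟨m, rfl⟩ : ∃ m, k = m + 1 := ⟨k - 1, by omega⟩
  have hMi : M i i ≠ 0 := (hM i).ne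
  set D : ℝ → ℝ := deriv (fun h => CN M Q u0 (m + 1) h i) with hD
  have hCNdiff : Differentiable ℝ (fun h => CN M Q u0 (m + 1) h i) :=
    (CN_contDiff M Q u0 (m + 1) i).differentiable (by simp)
  apply bigO_sq (f' := fun t => D t - (M.mulVec (uex M Q u0 t) + Q) i)
  · intro t
    exact ((hCNdiff t).hasDerivAt).sub (uex_hasDerivAt M Q u0 t i)
  · rw [CN_zero, uex_zero, sub_self]
  · have hD0 : D 0 = M i i * u0 i + aCoef M Q u0 i :=
      (CN_hasDerivAt_zero M Q u0 m i hMi).deriv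
    rw [hD0, uex_zero, Pi.add_apply, Matrix.mulVec, dotProduct, aCoef,
      ← Finset.add_sum_erase Finset.univ (fun j => M i j * u0 j) (Finset.mem_univ i)]
    ring
  · apply DifferentiableAt.sub
    · have h1 : ContDiff ℝ (⊤ : ℕ∞) (deriv fun h => CN M Q u0 (m + 1) h i) :=
        (contDiff_infty_iff_deriv.mp
          ((CN_contDiff M Q u0 (m + 1) i).of_le (mod_cast le_top))).2
      exact (h1.differentiable (by simp)) 0
    · have : (fun t => (M.mulVec (uex M Q u0 t) + Q) i)
          = fun t => (∑ j, M i j * uex M Q u0 t j) + Q i := by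
        funext t; simp [Matrix.mulVec, dotProduct]
      rw [this]
      exact (DifferentiableAt.fun_sum fun j _ => (differentiableAt_const _).mul
        (uex_hasDerivAt M Q u0 0 j).differentiableAt).add (differentiableAt_const _)
end

section
/- For every k ≥ 1 and every index i, the function h ↦ CN_{k+1}(h)_i − CN_k(h)_i is O(h²) as h → 0 from the right; i.e., each additional constant-neighbour iteration modifies only terms of order at least two in the step size (Appendix A, point B). -/
open Finset NormedSpace Asymptotics

/-!
`CN_{k+1}(h) = F_h^[k] (F_h u⁰)` and `CN_k(h) = F_h^[k] u⁰` are images under `F_h^[k]` of two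
points that are `O(h)` apart: `F_h u⁰ − u⁰ = ((M u⁰ + Q)_i / (−M_ii)) (1 − e^{M_ii h})`.
Since `0 ≤ 1 − e^{M_ii h} ≤ −M_ii h`, the map `F_h` is Lipschitz with constant `O(h)` in the
sup norm, so the difference is `O(h^{k+1})`, which is `O(h²)` for `k ≥ 1`.
-/

open scoped Matrix

lemma abs_one_sub_exp_le_neg {x : ℝ} (hx : x ≤ 0) : |1 - Real.exp x| ≤ -x := by
  rw [abs_of_nonneg (sub_nonneg.mpr (Real.exp_le_one_iff.mpr hx))]
  linarith [Real.add_one_le_exp x]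

lemma abs_div_neg_mul_one_sub_exp_le {m : ℝ} (hm : m < 0) {h : ℝ} (hh : 0 ≤ h) (x : ℝ) :
    |x / -m * (1 - Real.exp (m * h))| ≤ |x| * h := by
  have hexp := abs_one_sub_exp_le_neg (mul_nonpos_of_nonpos_of_nonneg hm.le hh)
  rw [abs_mul, abs_div, abs_neg, abs_of_neg hm]
  calc |x| / -m * |1 - Real.exp (m * h)| ≤ |x| / -m * (-(m * h)) :=
        mul_le_mul_of_nonneg_left hexp (div_nonneg (abs_nonneg x) (neg_nonneg.mpr hm.le))
    _ = |x| * h := by field_simp [hm.ne]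

section

variable {N : ℕ} (M : Matrix (Fin N) (Fin N) ℝ) (Q u0 : Fin N → ℝ)

lemma aCoef_sub_aCoef (v w : Fin N → ℝ) (i : Fin N) :
    aCoef M Q v i - aCoef M Q w i = ∑ j ∈ univ.erase i, M i j * (v j - w j) := by
  simp only [aCoef, mul_sub, sum_sub_distrib]
  ring

lemma aCoef_add_diag_mul_eq_mulVec_add (i : Fin N) :
    aCoef M Q u0 i + M i i * u0 i = (M *ᵥ u0 + Q) i := by
  rw [aCoef, Pi.add_apply, Matrix.mulVec, dotProduct, ← add_sum_erase _ _ (mem_univ i)]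
  ring

lemma abs_aCoef_sub_aCoef_le (v w : Fin N → ℝ) (i : Fin N) :
    |aCoef M Q v i - aCoef M Q w i| ≤ (∑ p, ∑ j, |M p j|) * ‖v - w‖ := by
  rw [aCoef_sub_aCoef]
  calc |∑ j ∈ univ.erase i, M i j * (v j - w j)|
      ≤ ∑ j ∈ univ.erase i, |M i j| * ‖v - w‖ := by
        refine (abs_sum_le_sum_abs _ _).trans (sum_le_sum fun j _ => ?_)
        rw [abs_mul]
        gcongr
        exact norm_le_pi_norm (v - w) j
    _ ≤ ∑ j, |M i j| * ‖v - w‖ :=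
        sum_le_sum_of_subset_of_nonneg (erase_subset _ _) fun _ _ _ => by positivity
    _ = (∑ j, |M i j|) * ‖v - w‖ := by rw [sum_mul]
    _ ≤ (∑ p, ∑ j, |M p j|) * ‖v - w‖ :=
        mul_le_mul_of_nonneg_right (single_le_sum (f := fun p => ∑ j, |M p j|)
          (fun p _ => sum_nonneg fun j _ => abs_nonneg _) (mem_univ i)) (norm_nonneg _)

lemma cnStep_sub_cnStep_apply (h : ℝ) (v w : Fin N → ℝ) (i : Fin N) :
    cnStep M Q u0 h v i - cnStep M Q u0 h w i
      = (aCoef M Q v i - aCoef M Q w i) / -M i i * (1 - Real.exp (M i i * h)) := by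
  simp only [cnStep]
  ring

lemma cnStep_apply_sub_self (h : ℝ) {i : Fin N} (hMi : M i i ≠ 0) :
    cnStep M Q u0 h u0 i - u0 i = (M *ᵥ u0 + Q) i / -M i i * (1 - Real.exp (M i i * h)) := by
  rw [← aCoef_add_diag_mul_eq_mulVec_add, cnStep]
  field_simp [hMi]
  ring

variable {M}

lemma lipschitzWith_cnStep (hM : ∀ i, M i i < 0) {h : ℝ} (hh : 0 ≤ h) :
    LipschitzWith (Real.toNNReal ((∑ p, ∑ j, |M p j|) * h)) (cnStep M Q u0 h) := by
  refine LipschitzWith.of_dist_le' fun v w => ?_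
  rw [dist_eq_norm, dist_eq_norm]
  refine pi_norm_le_iff_of_nonneg (by positivity) |>.mpr fun i => ?_
  rw [Pi.sub_apply, Real.norm_eq_abs, cnStep_sub_cnStep_apply]
  calc _ ≤ |aCoef M Q v i - aCoef M Q w i| * h := abs_div_neg_mul_one_sub_exp_le (hM i) hh _
    _ ≤ (∑ p, ∑ j, |M p j|) * ‖v - w‖ * h := by
        gcongr
        exact abs_aCoef_sub_aCoef_le M Q v w i
    _ = _ := by ring

lemma norm_cnStep_sub_self_le (hM : ∀ i, M i i < 0) {h : ℝ} (hh : 0 ≤ h) :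
    ‖cnStep M Q u0 h u0 - u0‖ ≤ ‖M *ᵥ u0 + Q‖ * h := by
  refine pi_norm_le_iff_of_nonneg (by positivity) |>.mpr fun i => ?_
  rw [Pi.sub_apply, Real.norm_eq_abs, cnStep_apply_sub_self M Q u0 h (hM i).ne]
  calc _ ≤ |(M *ᵥ u0 + Q) i| * h := abs_div_neg_mul_one_sub_exp_le (hM i) hh _
    _ ≤ ‖M *ᵥ u0 + Q‖ * h := by gcongr; exact norm_le_pi_norm (M *ᵥ u0 + Q) i

lemma norm_CN_succ_sub_CN_le (hM : ∀ i, M i i < 0) (k : ℕ) {h : ℝ} (hh : 0 ≤ h) :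
    ‖CN M Q u0 (k + 1) h - CN M Q u0 k h‖
      ≤ (∑ p, ∑ j, |M p j|) ^ k * ‖M *ᵥ u0 + Q‖ * h ^ (k + 1) := by
  have hK : 0 ≤ (∑ p, ∑ j, |M p j|) * h := by positivity
  rw [CN, CN, Function.iterate_succ_apply, ← dist_eq_norm]
  calc _ ≤ ((∑ p, ∑ j, |M p j|) * h) ^ k * dist (cnStep M Q u0 h u0) u0 := by
        simpa [Real.coe_toNNReal _ hK] using
          (lipschitzWith_cnStep Q u0 hM hh).iterate k |>.dist_le_mul _ _
    _ ≤ ((∑ p, ∑ j, |M p j|) * h) ^ k * (‖M *ᵥ u0 + Q‖ * h) := by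
        rw [dist_eq_norm]
        gcongr
        exact norm_cnStep_sub_self_le Q u0 hM hh
    _ = _ := by ring

end

theorem cn_iteration_difference_second_order_general {N : ℕ}
    (M : Matrix (Fin N) (Fin N) ℝ) (hM : ∀ i, M i i < 0) (Q u0 : Fin N → ℝ)
    (k : ℕ) (hk : 1 ≤ k) (i : Fin N) :
    (fun h : ℝ => CN M Q u0 (k + 1) h i - CN M Q u0 k h i)
      =O[nhdsWithin 0 (Set.Ioi 0)] fun h : ℝ => h ^ 2 := by
  refine IsBigO.of_bound ((∑ p, ∑ j, |M p j|) ^ k * ‖M *ᵥ u0 + Q‖) ?_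
  filter_upwards [Ioo_mem_nhdsGT (zero_lt_one' ℝ)] with h ⟨hh0, hh1⟩
  calc ‖CN M Q u0 (k + 1) h i - CN M Q u0 k h i‖
      ≤ ‖CN M Q u0 (k + 1) h - CN M Q u0 k h‖ :=
        norm_le_pi_norm (CN M Q u0 (k + 1) h - CN M Q u0 k h) i
    _ ≤ (∑ p, ∑ j, |M p j|) ^ k * ‖M *ᵥ u0 + Q‖ * h ^ (k + 1) :=
        norm_CN_succ_sub_CN_le Q u0 hM k hh0.le
    _ ≤ (∑ p, ∑ j, |M p j|) ^ k * ‖M *ᵥ u0 + Q‖ * ‖h ^ 2‖ := by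
        rw [Real.norm_eq_abs, abs_of_nonneg (by positivity)]
        exact mul_le_mul_of_nonneg_left (pow_le_pow_of_le_one hh0.le hh1.le (by omega))
          (by positivity)

/-- Appendix A, point B: each additional constant-neighbour iteration modifies only
terms of order at least two: `CN_{k+1}(h) − CN_k(h) = O(h²)` as `h → 0⁺`. -/
theorem cn_iteration_difference_second_order {N : ℕ} (hN : 1 ≤ N)
    (M : Matrix (Fin N) (Fin N) ℝ) (hM : ∀ i, M i i < 0) (Q u0 : Fin N → ℝ)
    (k : ℕ) (hk : 1 ≤ k) (i : Fin N) :
    (fun h : ℝ => CN M Q u0 (k + 1) h i - CN M Q u0 k h i)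
      =O[nhdsWithin 0 (Set.Ioi 0)] fun h : ℝ => h ^ 2 :=
  cn_iteration_difference_second_order_general M hM Q u0 k hk i
end

section
/- Under the heat-matrix assumptions with zero sources, for every index i there exist nonnegative weights w_1, …, w_N with Σ_j w_j = 1 such that CN_1(h)_i = Σ_j w_j u⁰_j; i.e., each component of the one-stage constant-neighbour update is a convex combination of the initial values. -/
open Finset NormedSpace Asymptotics

/- With `e = exp (M_ii h) ∈ (0, 1]`, `CN_1(h)_i = e u⁰_i + (1 - e) Σ_{j≠i} (M_ij / (-M_ii)) u⁰_j`.
For a heat matrix the coefficients `M_ij / (-M_ii)` form a probability vector, so the weights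
of `CN_1(h)_i` are a convex combination of two points of the standard simplex. -/

open Matrix

noncomputable def neighbourWeights {N : ℕ} (M : Matrix (Fin N) (Fin N) ℝ) (i : Fin N) :
    Fin N → ℝ :=
  fun j => if j = i then 0 else M i j / -M i i

theorem neighbourWeights_dotProduct {N : ℕ} (M : Matrix (Fin N) (Fin N) ℝ) (i : Fin N)
    (v : Fin N → ℝ) : neighbourWeights M i ⬝ᵥ v = aCoef M 0 v i / -M i i := by
  rw [aCoef, Pi.zero_apply, add_zero, Finset.sum_div, dotProduct,
    ← Finset.sum_erase univ (a := i) (by simp [neighbourWeights])]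
  refine Finset.sum_congr rfl fun j hj => ?_
  rw [neighbourWeights, if_neg (ne_of_mem_erase hj)]
  ring

theorem aCoef_zero_one_of_sum_eq_zero {N : ℕ} {M : Matrix (Fin N) (Fin N) ℝ} {i : Fin N}
    (hrow : ∑ j, M i j = 0) : aCoef M 0 1 i = -M i i := by
  have := Finset.add_sum_erase univ (M i) (mem_univ i)
  simp only [aCoef, Pi.one_apply, mul_one, Pi.zero_apply, add_zero]
  linarith

theorem neighbourWeights_mem_stdSimplex {N : ℕ} {M : Matrix (Fin N) (Fin N) ℝ} {i : Fin N}
    (hoff : ∀ j, j ≠ i → 0 ≤ M i j) (hrow : ∑ j, M i j = 0) (hdiag : M i i < 0) :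
    neighbourWeights M i ∈ stdSimplex ℝ (Fin N) := by
  refine ⟨fun j => ?_, ?_⟩
  · unfold neighbourWeights
    split_ifs with hj
    · exact le_rfl
    · exact div_nonneg (hoff j hj) (neg_nonneg.mpr hdiag.le)
  · rw [← dotProduct_one, neighbourWeights_dotProduct, aCoef_zero_one_of_sum_eq_zero hrow,
      div_self (neg_ne_zero.mpr hdiag.ne)]

theorem cnStep_zero_apply_eq_dotProduct {N : ℕ} (M : Matrix (Fin N) (Fin N) ℝ)
    (u0 : Fin N → ℝ) (h : ℝ) (i : Fin N) :
    cnStep M 0 u0 h u0 i =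
      (Real.exp (M i i * h) • Pi.single i 1
        + (1 - Real.exp (M i i * h)) • neighbourWeights M i) ⬝ᵥ u0 := by
  rw [add_dotProduct, smul_dotProduct, smul_dotProduct, single_dotProduct,
    neighbourWeights_dotProduct, cnStep, smul_eq_mul, smul_eq_mul]
  ring

theorem cn1_convex_combination_general {N : ℕ} (M : Matrix (Fin N) (Fin N) ℝ)
    (hoff : ∀ i j, j ≠ i → 0 ≤ M i j)
    (hrow : ∀ i, ∑ j, M i j = 0)
    (hdiag : ∀ i, M i i < 0)
    (u0 : Fin N → ℝ) (h : ℝ) (hh : 0 < h) (i : Fin N) :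
    ∃ w : Fin N → ℝ, (∀ j, 0 ≤ w j) ∧ (∑ j, w j) = 1 ∧
      CN M (0 : Fin N → ℝ) u0 1 h i = ∑ j, w j * u0 j := by
  have he_le_one : Real.exp (M i i * h) ≤ 1 :=
    Real.exp_le_one_iff.mpr (mul_nonpos_of_nonpos_of_nonneg (hdiag i).le hh.le)
  obtain ⟨hw_nonneg, hw_sum⟩ :=
    convex_stdSimplex ℝ (Fin N) (single_mem_stdSimplex ℝ i)
      (neighbourWeights_mem_stdSimplex (hoff i) (hrow i) (hdiag i))
      (Real.exp_pos _).le (sub_nonneg.mpr he_le_one) (add_sub_cancel _ _)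
  exact ⟨_, hw_nonneg, hw_sum, cnStep_zero_apply_eq_dotProduct M u0 h i⟩

/-- Appendix B, point A: under the heat-matrix assumptions with zero sources, each
component of the one-stage constant-neighbour update `CN_1(h)` is a convex
combination of the initial values. -/
theorem cn1_convex_combination {N : ℕ} (hN : 1 ≤ N) (M : Matrix (Fin N) (Fin N) ℝ)
    (hoff : ∀ i j, j ≠ i → 0 ≤ M i j)
    (hrow : ∀ i, ∑ j, M i j = 0)
    (hdiag : ∀ i, M i i < 0)
    (u0 : Fin N → ℝ) (h : ℝ) (hh : 0 < h) (i : Fin N) :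
    ∃ w : Fin N → ℝ, (∀ j, 0 ≤ w j) ∧ (∑ j, w j) = 1 ∧
      CN M (0 : Fin N → ℝ) u0 1 h i = ∑ j, w j * u0 j :=
  cn1_convex_combination_general M hoff hrow hdiag u0 h hh i
end

section
/- Under the heat-matrix assumptions with zero sources, for every k ≥ 1 and every index i there exist nonnegative weights w_1, …, w_N with Σ_j w_j = 1 such that CN_k(h)_i = Σ_j w_j u⁰_j; i.e., every iterated constant-neighbour value CN_1, CN_2, CN_3, … is a convex combination of the initial values (Theorem 2, constant-neighbour part). -/
open Finset NormedSpace Asymptotics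

/-!
With `Q = 0` and `e = exp (M_ii h) ∈ (0, 1]`, the step reads
`F_h(v)_i = e u⁰_i + (1 - e) Σ_{j≠i} (M_ij / -M_ii) v_j`, and the neighbour weights
`M_ij / -M_ii` are nonnegative with sum one by the row-sum condition. So `F_h(v)_i` is a convex
combination of `u⁰_i` and the `v_j`: any convex set of reals containing every `u⁰_j` contains every
coordinate of every iterate. The convex combinations of the `u⁰_j`, i.e. the image of the standard
simplex under `w ↦ Σ_j w_j u⁰_j`, form such a set.
-/

section HeatMatrix

variable {N : ℕ} {M : Matrix (Fin N) (Fin N) ℝ}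

theorem cnStep_zero_apply (u0 : Fin N → ℝ) (h : ℝ) (v : Fin N → ℝ) (i : Fin N) :
    cnStep M 0 u0 h v i = Real.exp (M i i * h) • u0 i
      + (1 - Real.exp (M i i * h)) • ∑ j ∈ univ.erase i, (M i j / -M i i) • v j := by
  simp only [cnStep, aCoef, Pi.zero_apply, add_zero, smul_eq_mul, sum_div, mul_sum]
  congr 1
  · ring
  · rw [sum_mul]
    exact sum_congr rfl fun j _ => by ring

theorem sum_erase_div_neg_diag_eq_one (hrow : ∀ i, ∑ j, M i j = 0) {i : Fin N}
    (hii : M i i ≠ 0) : ∑ j ∈ univ.erase i, M i j / -M i i = 1 := by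
  have hsplit := hrow i
  rw [← add_sum_erase _ _ (mem_univ i)] at hsplit
  rw [← sum_div, div_eq_one_iff_eq (neg_ne_zero.mpr hii)]
  linarith

theorem cnStep_zero_mem_of_convex (hoff : ∀ i j, j ≠ i → 0 ≤ M i j)
    (hrow : ∀ i, ∑ j, M i j = 0) (hdiag : ∀ i, M i i < 0) {S : Set ℝ} (hS : Convex ℝ S)
    {u0 v : Fin N → ℝ} (hu0 : ∀ i, u0 i ∈ S) (hv : ∀ j, v j ∈ S) {h : ℝ} (hh : 0 ≤ h)
    (i : Fin N) : cnStep M 0 u0 h v i ∈ S := by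
  have hexp_le_one : Real.exp (M i i * h) ≤ 1 :=
    Real.exp_le_one_iff.mpr (mul_nonpos_of_nonpos_of_nonneg (hdiag i).le hh)
  have hneighbours : ∑ j ∈ univ.erase i, (M i j / -M i i) • v j ∈ S :=
    hS.sum_mem (fun j hj => div_nonneg (hoff i j (ne_of_mem_erase hj)) (by linarith [hdiag i]))
      (sum_erase_div_neg_diag_eq_one hrow (hdiag i).ne) fun j _ => hv j
  rw [cnStep_zero_apply]
  exact hS (hu0 i) hneighbours (Real.exp_pos _).le (sub_nonneg.mpr hexp_le_one)
    (add_sub_cancel _ _)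

theorem CN_zero_mem_of_convex (hoff : ∀ i j, j ≠ i → 0 ≤ M i j)
    (hrow : ∀ i, ∑ j, M i j = 0) (hdiag : ∀ i, M i i < 0) {S : Set ℝ} (hS : Convex ℝ S)
    {u0 : Fin N → ℝ} (hu0 : ∀ i, u0 i ∈ S) {h : ℝ} (hh : 0 ≤ h) (k : ℕ) (i : Fin N) :
    CN M 0 u0 k h i ∈ S := by
  induction k generalizing i with
  | zero => exact hu0 i
  | succ k ih =>
    rw [CN, Function.iterate_succ_apply']
    exact cnStep_zero_mem_of_convex hoff hrow hdiag hS hu0 ih hh i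

end HeatMatrix

theorem convex_image_stdSimplex {ι : Type*} [Fintype ι] (u : ι → ℝ) :
    Convex ℝ ((fun w => ∑ j, w j * u j) '' stdSimplex ℝ ι) := by
  have hlin : ⇑(Fintype.linearCombination ℝ u) = fun w => ∑ j, w j * u j :=
    funext fun w => by simp [Fintype.linearCombination_apply]
  exact hlin ▸ (convex_stdSimplex ℝ ι).linear_image (Fintype.linearCombination ℝ u)

theorem mem_image_stdSimplex_self {ι : Type*} [Fintype ι] [DecidableEq ι] (u : ι → ℝ)
    (i : ι) :
    u i ∈ (fun w => ∑ j, w j * u j) '' stdSimplex ℝ ι :=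
  ⟨_, ite_eq_mem_stdSimplex ℝ i, by simp⟩

theorem cn_iterates_convex_combination_general {N : ℕ}
    (M : Matrix (Fin N) (Fin N) ℝ)
    (hoff : ∀ i j, j ≠ i → 0 ≤ M i j)
    (hrow : ∀ i, ∑ j, M i j = 0)
    (hdiag : ∀ i, M i i < 0)
    (u0 : Fin N → ℝ) (h : ℝ) (hh : 0 < h) (k : ℕ) (i : Fin N) :
    ∃ w : Fin N → ℝ, (∀ j, 0 ≤ w j) ∧ (∑ j, w j) = 1 ∧
      CN M (0 : Fin N → ℝ) u0 k h i = ∑ j, w j * u0 j := by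
  obtain ⟨w, ⟨hw_nonneg, hw_sum⟩, hw⟩ :=
    CN_zero_mem_of_convex hoff hrow hdiag (convex_image_stdSimplex u0)
      (mem_image_stdSimplex_self u0) hh.le k i
  exact ⟨w, hw_nonneg, hw_sum, hw.symm⟩

/-- Theorem 2 (constant-neighbour part): under the heat-matrix assumptions with zero
sources, every iterated constant-neighbour value `CN_k(h)_i`, `k ≥ 1`, is a convex
combination of the initial values. -/
theorem cn_iterates_convex_combination {N : ℕ} (hN : 1 ≤ N)
    (M : Matrix (Fin N) (Fin N) ℝ)
    (hoff : ∀ i j, j ≠ i → 0 ≤ M i j)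
    (hrow : ∀ i, ∑ j, M i j = 0)
    (hdiag : ∀ i, M i i < 0)
    (u0 : Fin N → ℝ) (h : ℝ) (hh : 0 < h) (k : ℕ) (hk : 1 ≤ k) (i : Fin N) :
    ∃ w : Fin N → ℝ, (∀ j, 0 ≤ w j) ∧ (∑ j, w j) = 1 ∧
      CN M (0 : Fin N → ℝ) u0 k h i = ∑ j, w j * u0 j :=
  cn_iterates_convex_combination_general M hoff hrow hdiag u0 h hh k i
end

section
/- Under the heat-matrix assumptions with zero sources, for every k ≥ 2 and every index i there exist nonnegative weights w_1, …, w_N with Σ_j w_j = 1 such that LN_k(h)_i = Σ_j w_j u⁰_j; i.e., every iterated linear-neighbour value LN_2, LN_3, LN_4, … is a convex combination of the initial values (Theorem 2, linear-neighbour part). -/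
open Finset NormedSpace Asymptotics

/-!
With zero sources both steps write the new value at node `i` as
`E u⁰ᵢ + b Σ_{j≠i} M_ij u⁰_j + c Σ_{j≠i} M_ij v_j` with `E = e^{M_ii h}` and
`E + (b + c)(-M_ii) = 1`. For the linear-neighbour step, `b ≥ 0` and `c ≥ 0` are the two
inequalities `1 + x ≤ eˣ` at `x = M_ii h` and at `x = -M_ii h`. So every step maps the box `[min u⁰, max u⁰]ᴺ`
into itself, and a point of `[min u⁰, max u⁰]` is a convex combination of the smallest and
the largest entry of `u⁰`.
-/

lemma combination_mem_Icc {ι : Type*} {t : Finset ι} {p x y : ι → ℝ} {z E b c lo hi : ℝ}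
    (hp : ∀ j ∈ t, 0 ≤ p j) (hz : z ∈ Set.Icc lo hi) (hx : ∀ j ∈ t, x j ∈ Set.Icc lo hi)
    (hy : ∀ j ∈ t, y j ∈ Set.Icc lo hi) (hE : 0 ≤ E) (hb : 0 ≤ b) (hc : 0 ≤ c)
    (hsum : E + (b + c) * ∑ j ∈ t, p j = 1) :
    E * z + b * ∑ j ∈ t, p j * x j + c * ∑ j ∈ t, p j * y j ∈ Set.Icc lo hi := by
  have bounds : ∀ f : ι → ℝ, (∀ j ∈ t, f j ∈ Set.Icc lo hi) →
      (∑ j ∈ t, p j) * lo ≤ ∑ j ∈ t, p j * f j ∧ ∑ j ∈ t, p j * f j ≤ (∑ j ∈ t, p j) * hi :=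
    fun f hf => by
      simp only [sum_mul]
      exact ⟨sum_le_sum fun j hj => mul_le_mul_of_nonneg_left (hf j hj).1 (hp j hj),
        sum_le_sum fun j hj => mul_le_mul_of_nonneg_left (hf j hj).2 (hp j hj)⟩
  obtain ⟨hxlo, hxhi⟩ := bounds x hx
  obtain ⟨hylo, hyhi⟩ := bounds y hy
  constructor
  · linear_combination mul_le_mul_of_nonneg_left hz.1 hE + mul_le_mul_of_nonneg_left hxlo hb
      + mul_le_mul_of_nonneg_left hylo hc - lo * hsum
  · linear_combination mul_le_mul_of_nonneg_left hz.2 hE + mul_le_mul_of_nonneg_left hxhi hb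
      + mul_le_mul_of_nonneg_left hyhi hc + hi * hsum

lemma exists_weights_of_mem_Icc {ι : Type*} [Fintype ι] [DecidableEq ι] {u : ι → ℝ} {a b : ι}
    {x : ℝ} (hx : x ∈ Set.Icc (u a) (u b)) :
    ∃ w : ι → ℝ, (∀ j, 0 ≤ w j) ∧ ∑ j, w j = 1 ∧ x = ∑ j, w j * u j := by
  rw [← segment_eq_Icc (hx.1.trans hx.2)] at hx
  obtain ⟨s, t, hs, ht, hst, rfl⟩ := hx
  refine ⟨s • Pi.single a 1 + t • Pi.single b 1, fun j => ?_, ?_, ?_⟩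
  · simp only [Pi.add_apply, Pi.smul_apply, Pi.single_apply, smul_eq_mul]
    split_ifs <;> positivity
  · simp [sum_add_distrib, Pi.single_apply, hst]
  · simp [add_mul, sum_add_distrib, Pi.single_apply]

lemma lnStep_slopeCoeff_nonneg {m h : ℝ} (hh : 0 < h) :
    0 ≤ -m⁻¹ - (-m⁻¹) ^ 2 * (1 - Real.exp (m * h)) / h := by
  have key := Real.add_one_le_exp (m * h)
  have hfrac : -m⁻¹ - (-m⁻¹) ^ 2 * (1 - Real.exp (m * h)) / h
      = (Real.exp (m * h) - (m * h + 1)) / (m ^ 2 * h) := by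
    field_simp; ring
  rw [hfrac]
  exact div_nonneg (by linarith) (by positivity)

lemma lnStep_baseCoeff_nonneg {m h : ℝ} (hh : 0 < h) :
    0 ≤ -m⁻¹ * (1 - Real.exp (m * h)) - (-m⁻¹ - (-m⁻¹) ^ 2 * (1 - Real.exp (m * h)) / h) := by
  have key : Real.exp (m * h) * (-(m * h) + 1) ≤ 1 := by
    have := mul_le_mul_of_nonneg_left (Real.add_one_le_exp (-(m * h))) (Real.exp_pos (m * h)).le
    rwa [← Real.exp_add, add_neg_cancel, Real.exp_zero] at this
  have hfrac : -m⁻¹ * (1 - Real.exp (m * h)) - (-m⁻¹ - (-m⁻¹) ^ 2 * (1 - Real.exp (m * h)) / h)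
      = (1 - Real.exp (m * h) * (-(m * h) + 1)) / (m ^ 2 * h) := by
    field_simp; ring
  rw [hfrac]
  exact div_nonneg (by linarith) (by positivity)

section HeatMatrix

variable {N : ℕ} {M : Matrix (Fin N) (Fin N) ℝ} {u0 : Fin N → ℝ} {h lo hi : ℝ}

lemma sum_erase_eq_neg_diag (hrow : ∀ i, ∑ j, M i j = 0) (i : Fin N) :
    ∑ j ∈ univ.erase i, M i j = -M i i := by
  linarith [add_sum_erase univ (M i) (mem_univ i), hrow i]

lemma cnStep_mapsTo (hoff : ∀ i j, j ≠ i → 0 ≤ M i j) (hrow : ∀ i, ∑ j, M i j = 0)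
    (hdiag : ∀ i, M i i < 0) (hu0 : u0 ∈ Set.univ.pi fun _ => Set.Icc lo hi) (hh : 0 ≤ h) :
    Set.MapsTo (cnStep M 0 u0 h) (Set.univ.pi fun _ => Set.Icc lo hi)
      (Set.univ.pi fun _ => Set.Icc lo hi) := by
  intro v hv i _
  rw [Set.mem_univ_pi] at hu0 hv
  have hE : Real.exp (M i i * h) ≤ 1 :=
    Real.exp_le_one_iff.2 (mul_nonpos_of_nonpos_of_nonneg (hdiag i).le hh)
  have hcomb := combination_mem_Icc (t := univ.erase i) (p := M i) (x := u0) (y := v)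
    (E := Real.exp (M i i * h)) (b := 0) (c := (1 - Real.exp (M i i * h)) / -M i i)
    (fun j hj => hoff i j (ne_of_mem_erase hj)) (hu0 i) (fun j _ => hu0 j) (fun j _ => hv j)
    (Real.exp_pos _).le le_rfl (div_nonneg (by linarith) (by linarith [hdiag i]))
    (by rw [sum_erase_eq_neg_diag hrow, zero_add,
      div_mul_cancel₀ _ (neg_ne_zero.2 (hdiag i).ne)]; ring)
  convert hcomb using 1
  simp only [cnStep, aCoef, Pi.zero_apply, add_zero]
  ring

lemma lnStep_mapsTo (hoff : ∀ i j, j ≠ i → 0 ≤ M i j) (hrow : ∀ i, ∑ j, M i j = 0)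
    (hdiag : ∀ i, M i i < 0) (hu0 : u0 ∈ Set.univ.pi fun _ => Set.Icc lo hi) (hh : 0 < h) :
    Set.MapsTo (lnStep M 0 u0 h) (Set.univ.pi fun _ => Set.Icc lo hi)
      (Set.univ.pi fun _ => Set.Icc lo hi) := by
  intro v hv i _
  rw [Set.mem_univ_pi] at hu0 hv
  have hcomb := combination_mem_Icc (t := univ.erase i) (p := M i) (x := u0) (y := v)
    (E := Real.exp (M i i * h)) (fun j hj => hoff i j (ne_of_mem_erase hj)) (hu0 i)
    (fun j _ => hu0 j) (fun j _ => hv j)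
    (Real.exp_pos _).le (lnStep_baseCoeff_nonneg hh) (lnStep_slopeCoeff_nonneg hh)
    (by rw [sum_erase_eq_neg_diag hrow]; field_simp [(hdiag i).ne]; ring)
  convert hcomb using 1
  simp only [lnStep, sCoef, aCoef, Pi.zero_apply, add_zero]
  field_simp [(hdiag i).ne]
  ring

end HeatMatrix

theorem ln_iterates_convex_combination_general {N : ℕ}
    (M : Matrix (Fin N) (Fin N) ℝ)
    (hoff : ∀ i j, j ≠ i → 0 ≤ M i j)
    (hrow : ∀ i, ∑ j, M i j = 0)
    (hdiag : ∀ i, M i i < 0)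
    (u0 : Fin N → ℝ) (h : ℝ) (hh : 0 < h) (k : ℕ) (i : Fin N) :
    ∃ w : Fin N → ℝ, (∀ j, 0 ≤ w j) ∧ (∑ j, w j) = 1 ∧
      LN M (0 : Fin N → ℝ) u0 k h i = ∑ j, w j * u0 j := by
  have : Nonempty (Fin N) := ⟨i⟩
  obtain ⟨a, ha⟩ := Finite.exists_min u0
  obtain ⟨b, hb⟩ := Finite.exists_max u0
  have hu0 : u0 ∈ Set.univ.pi fun _ => Set.Icc (u0 a) (u0 b) := fun j _ => ⟨ha j, hb j⟩
  have hLN : LN M 0 u0 k h ∈ Set.univ.pi fun _ => Set.Icc (u0 a) (u0 b) :=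
    (lnStep_mapsTo hoff hrow hdiag hu0 hh).iterate (k - 1)
      (cnStep_mapsTo hoff hrow hdiag hu0 hh.le hu0)
  exact exists_weights_of_mem_Icc (hLN i trivial)

/-- Theorem 2 (linear-neighbour part): under the heat-matrix assumptions with zero
sources, every iterated linear-neighbour value `LN_k(h)_i`, `k ≥ 2`, is a convex
combination of the initial values. -/
theorem ln_iterates_convex_combination {N : ℕ} (hN : 1 ≤ N)
    (M : Matrix (Fin N) (Fin N) ℝ)
    (hoff : ∀ i j, j ≠ i → 0 ≤ M i j)
    (hrow : ∀ i, ∑ j, M i j = 0)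
    (hdiag : ∀ i, M i i < 0)
    (u0 : Fin N → ℝ) (h : ℝ) (hh : 0 < h) (k : ℕ) (hk : 2 ≤ k) (i : Fin N) :
    ∃ w : Fin N → ℝ, (∀ j, 0 ≤ w j) ∧ (∑ j, w j) = 1 ∧
      LN M (0 : Fin N → ℝ) u0 k h i = ∑ j, w j * u0 j :=
  ln_iterates_convex_combination_general M hoff hrow hdiag u0 h hh k i
end

section
/- Under the heat-matrix assumptions with zero sources, fix k ≥ 1 and define the one-timestep map S_h : ℝ^N → ℝ^N by letting S_h(u) be the k-stage constant-neighbour update computed from initial vector u (i.e., S_h(u) = (F_{h,u})^{∘k}(u), where F_{h,u}(v)_i = u_i e^{M_ii h} + (Σ_{j≠i} M_ij v_j /(−M_ii))(1 − e^{M_ii h})). Then for every number of timesteps n ≥ 0, every step size h > 0 and every index i, min_j u⁰_j ≤ (S_h^{∘n}(u⁰))_i ≤ max_j u⁰_j; in particular the method satisfies the maximum and minimum principles and is unconditionally stable: the computed values remain bounded by the initial extremes for arbitrarily large h. -/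
open Finset NormedSpace Asymptotics

/-- One full timestep of the `k`-stage constant-neighbour scheme: the current values
`u` play the role of the initial values in the stage map. -/
noncomputable def cnTimestep {N : ℕ} (M : Matrix (Fin N) (Fin N) ℝ) (k : ℕ) (h : ℝ)
    (u : Fin N → ℝ) : Fin N → ℝ :=
  (cnStep M (0 : Fin N → ℝ) u h)^[k] u

/-!
Each stage value `F(v)_i = e^{M_ii h} u_i + (1 - e^{M_ii h}) a_i(v) / (-M_ii)` is a convex
combination of `u_i` and of `a_i(v) / (-M_ii)`, which (zero row sums, nonnegative
off-diagonal entries) is a weighted average of the neighbours `v_j`. Hence the box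
`[lo, hi]^N` is invariant under every stage for any `h ≥ 0`, so under every timestep, and
`u⁰` lies in the box with `lo = min u⁰`, `hi = max u⁰`.
-/

section HeatMatrix

variable {N : ℕ} {M : Matrix (Fin N) (Fin N) ℝ} {lo hi : ℝ}

lemma sum_erase_diag_eq_neg_diag {i : Fin N} (hrow : ∑ j, M i j = 0) :
    ∑ j ∈ univ.erase i, M i j = -M i i := by
  linarith [add_sum_erase univ (M i) (mem_univ i)]

lemma aCoef_zero_div_neg_diag_mem_Icc {i : Fin N} (hoff : ∀ j, j ≠ i → 0 ≤ M i j)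
    (hrow : ∑ j, M i j = 0) (hdiag : M i i < 0) {v : Fin N → ℝ}
    (hv : ∀ j, v j ∈ Set.Icc lo hi) :
    aCoef M 0 v i / -M i i ∈ Set.Icc lo hi := by
  have hpos : 0 < -M i i := neg_pos.mpr hdiag
  have hmul : ∀ c, -M i i * c = ∑ j ∈ univ.erase i, M i j * c := fun c => by
    rw [← sum_mul, sum_erase_diag_eq_neg_diag hrow]
  have ha : aCoef M 0 v i = ∑ j ∈ univ.erase i, M i j * v j := by simp [aCoef]
  constructor
  · rw [le_div_iff₀ hpos, mul_comm, hmul, ha]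
    exact sum_le_sum fun j hj =>
      mul_le_mul_of_nonneg_left (hv j).1 (hoff j (ne_of_mem_erase hj))
  · rw [div_le_iff₀ hpos, mul_comm, hmul, ha]
    exact sum_le_sum fun j hj =>
      mul_le_mul_of_nonneg_left (hv j).2 (hoff j (ne_of_mem_erase hj))

lemma cnStep_mapsTo_pi_Icc (hoff : ∀ i j, j ≠ i → 0 ≤ M i j) (hrow : ∀ i, ∑ j, M i j = 0)
    (hdiag : ∀ i, M i i < 0) {h : ℝ} (hh : 0 ≤ h) {u : Fin N → ℝ}
    (hu : u ∈ Set.univ.pi fun _ => Set.Icc lo hi) :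
    Set.MapsTo (cnStep M 0 u h) (Set.univ.pi fun _ => Set.Icc lo hi)
      (Set.univ.pi fun _ => Set.Icc lo hi) := by
  intro v hv
  rw [Set.mem_univ_pi] at hu hv ⊢
  intro i
  have hexp_nonneg : 0 ≤ Real.exp (M i i * h) := (Real.exp_pos _).le
  have hexp_le_one : Real.exp (M i i * h) ≤ 1 :=
    Real.exp_le_one_iff.mpr (mul_nonpos_of_nonpos_of_nonneg (hdiag i).le hh)
  simpa only [cnStep, smul_eq_mul, mul_comm] using
    convex_Icc lo hi (hu i) (aCoef_zero_div_neg_diag_mem_Icc (hoff i) (hrow i) (hdiag i) hv)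
      hexp_nonneg (sub_nonneg.mpr hexp_le_one) (add_sub_cancel _ _)

lemma cnTimestep_mapsTo_pi_Icc (hoff : ∀ i j, j ≠ i → 0 ≤ M i j)
    (hrow : ∀ i, ∑ j, M i j = 0) (hdiag : ∀ i, M i i < 0) (k : ℕ) {h : ℝ} (hh : 0 ≤ h) :
    Set.MapsTo (cnTimestep M k h) (Set.univ.pi fun _ => Set.Icc lo hi)
      (Set.univ.pi fun _ => Set.Icc lo hi) :=
  fun _ hu => (cnStep_mapsTo_pi_Icc hoff hrow hdiag hh hu).iterate k hu

end HeatMatrix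

theorem cn_method_unconditionally_stable_general {N : ℕ} (hN : 1 ≤ N)
    (M : Matrix (Fin N) (Fin N) ℝ)
    (hoff : ∀ i j, j ≠ i → 0 ≤ M i j)
    (hrow : ∀ i, ∑ j, M i j = 0)
    (hdiag : ∀ i, M i i < 0)
    (u0 : Fin N → ℝ) (k : ℕ) :
    ∀ (n : ℕ) (h : ℝ), 0 < h → ∀ i : Fin N,
      Finset.univ.inf' ⟨⟨0, hN⟩, Finset.mem_univ _⟩ u0
          ≤ (cnTimestep M k h)^[n] u0 i ∧
        (cnTimestep M k h)^[n] u0 i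
          ≤ Finset.univ.sup' ⟨⟨0, hN⟩, Finset.mem_univ _⟩ u0 := by
  intro n h hh i
  have hu0 : u0 ∈ Set.univ.pi fun _ => Set.Icc (univ.inf' ⟨⟨0, hN⟩, mem_univ _⟩ u0)
      (univ.sup' ⟨⟨0, hN⟩, mem_univ _⟩ u0) :=
    Set.mem_univ_pi.mpr fun j => ⟨inf'_le _ (mem_univ j), le_sup' _ (mem_univ j)⟩
  exact Set.mem_univ_pi.mp ((cnTimestep_mapsTo_pi_Icc hoff hrow hdiag k hh.le).iterate n hu0) i

/-- Unconditional stability / maximum and minimum principles: under the heat-matrix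
assumptions with zero sources, for every number of timesteps `n`, every step size
`h > 0` and every index `i`, the value computed by `n` timesteps of the `k`-stage
constant-neighbour method stays between the initial extremes. -/
theorem cn_method_unconditionally_stable {N : ℕ} (hN : 1 ≤ N)
    (M : Matrix (Fin N) (Fin N) ℝ)
    (hoff : ∀ i j, j ≠ i → 0 ≤ M i j)
    (hrow : ∀ i, ∑ j, M i j = 0)
    (hdiag : ∀ i, M i i < 0)
    (u0 : Fin N → ℝ) (k : ℕ) (hk : 1 ≤ k) :
    ∀ (n : ℕ) (h : ℝ), 0 < h → ∀ i : Fin N,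
      Finset.univ.inf' ⟨⟨0, hN⟩, Finset.mem_univ _⟩ u0
          ≤ (cnTimestep M k h)^[n] u0 i ∧
        (cnTimestep M k h)^[n] u0 i
          ≤ Finset.univ.sup' ⟨⟨0, hN⟩, Finset.mem_univ _⟩ u0 :=
  cn_method_unconditionally_stable_general hN M hoff hrow hdiag u0 k
end
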